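/- arXiv:2605.01228 — 10 statements merged into one kernel-verified Lean document; each statement's English description precedes it below -/
import Mathlib

section
/- Let M ≥ 6 be an even integer and N1 ≥ 2. Define P_a1 = {kM : 0 ≤ k ≤ N1−1}, P_a2 = {N1·M − M/2 − 1 + j : 1 ≤ j ≤ M/2}, P_a3 = {N1·M + j : 1 ≤ j ≤ M/2 − 1}, and P = P_a1 ∪ P_a2 ∪ P_a3. Then the difference set D = {u − v : u, v ∈ P} contains every integer n with 0 ≤ n ≤ N1·M + M/2 − 1 except n = N1·M. -/
def diffSet (P : Set ℤ) : Set ℤ := {d | ∃ u ∈ P, ∃ v ∈ P, d = u - v}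

def sumSet (P : Set ℤ) : Set ℤ := {s | ∃ u ∈ P, ∃ v ∈ P, s = u + v}

def SDC (P : Set ℤ) : Set ℤ :=
  diffSet P ∪ sumSet P ∪ {s | ∃ u ∈ P, ∃ v ∈ P, s = -u - v}

noncomputable def weight (P : Set ℤ) (f : ℤ) : ℕ :=
  Set.ncard {p : ℤ × ℤ | p.1 ∈ P ∧ p.2 ∈ P ∧ p.1 - p.2 = f}

def AULAs (M N1 : ℤ) : Set ℤ :=
  {x | ∃ k, 0 ≤ k ∧ k ≤ N1 - 1 ∧ x = k * M} ∪
  {x | ∃ j, 1 ≤ j ∧ j ≤ M / 2 ∧ x = N1 * M - M / 2 - 1 + j} ∪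
  {x | ∃ j, 1 ≤ j ∧ j ≤ M / 2 - 1 ∧ x = N1 * M + j}

def SAULAs (M N1 : ℤ) : Set ℤ :=
  {x | ∃ k, 0 ≤ k ∧ k ≤ N1 - 1 ∧ x = M / 2 + k * M} ∪
  {x | ∃ j, 1 ≤ j ∧ j ≤ M / 2 ∧ x = N1 * M - 1 + j} ∪
  {x | ∃ j, 1 ≤ j ∧ j ≤ M / 2 - 1 ∧ x = N1 * M + M / 2 + j}

def TSAULAs (M N1 : ℤ) : Set ℤ :=
  {x | ∃ k, 0 ≤ k ∧ k ≤ N1 - 1 ∧ x = M / 2 + k * M} ∪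
  {x | ∃ j, 1 ≤ j ∧ j ≤ M / 2 - 1 ∧ x = N1 * M - M / 2 + 2 * j} ∪
  {-(N1 * M) - M / 2 + 1} ∪
  {x | ∃ j, 1 ≤ j ∧ j ≤ M / 2 - 1 ∧ x = N1 * M + M / 2 - 1 + 2 * j}

def CoTSAULAs (M N1 : ℤ) : Set ℤ :=
  TSAULAs M N1 ∪ {N1 * M + 3 * M / 2 - 2}

theorem stmt0 (M N1 : ℤ) (hM : 6 ≤ M) (hMe : Even M) (hN1 : 2 ≤ N1) :
    ∀ n : ℤ, 0 ≤ n → n ≤ N1 * M + M / 2 - 1 → n ≠ N1 * M →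
      n ∈ diffSet (AULAs M N1) := by
  intro n hn0 hn1 hne
  obtain ⟨m, hm⟩ := hMe
  have hm3 : 3 ≤ m := by omega
  have hM2 : M / 2 = m := by omega
  have hMpos : (0:ℤ) < M := by omega
  by_cases hbig : N1 * M ≤ n
  · exact ⟨n, Or.inr ⟨n - N1 * M, by omega, by omega, by ring⟩,
      0, Or.inl (Or.inl ⟨0, le_refl 0, by omega, by ring⟩), by ring⟩
  · push_neg at hbig
    have hdiv : n = M * (n / M) + n % M := (Int.mul_ediv_add_emod n M).symm
    set q := n / M with hq
    set r := n % M with hr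
    have hr0 : 0 ≤ r := Int.emod_nonneg n (by omega)
    have hrM : r < M := Int.emod_lt_of_pos n hMpos
    have hq0 : 0 ≤ q := Int.ediv_nonneg hn0 (le_of_lt hMpos)
    have hqN : q ≤ N1 - 1 := by
      by_contra h
      push_neg at h
      have h1 : N1 ≤ q := by omega
      nlinarith [mul_le_mul_of_nonneg_left h1 (le_of_lt hMpos)]
    rcases lt_trichotomy r m with hrm | hrm | hrm
    · rcases eq_or_ne r 0 with hreq | hrne
      · exact ⟨q * M, Or.inl (Or.inl ⟨q, hq0, hqN, rfl⟩),
          0 * M, Or.inl (Or.inl ⟨0, le_refl 0, by omega, rfl⟩),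
          by linear_combination hdiv + hreq⟩
      · rcases eq_or_ne q 0 with hqeq | hqne
        · exact ⟨N1 * M - M / 2 - 1 + (r + 1), Or.inl (Or.inr ⟨r + 1, by omega, by omega, rfl⟩),
            N1 * M - M / 2 - 1 + 1, Or.inl (Or.inr ⟨1, le_refl 1, by omega, rfl⟩),
            by linear_combination hdiv + M * hqeq⟩
        · exact ⟨N1 * M + r, Or.inr ⟨r, by omega, by omega, rfl⟩,
            (N1 - q) * M, Or.inl (Or.inl ⟨N1 - q, by omega, by omega, rfl⟩),
            by linear_combination hdiv⟩
    · exact ⟨N1 * M - M / 2 - 1 + 1, Or.inl (Or.inr ⟨1, le_refl 1, by omega, rfl⟩),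
        (N1 - q - 1) * M, Or.inl (Or.inl ⟨N1 - q - 1, by omega, by omega, rfl⟩),
        by linear_combination hdiv + hM2 - hm + (hrm : r = m)⟩
    · exact ⟨N1 * M - M / 2 - 1 + (r - m + 1), Or.inl (Or.inr ⟨r - m + 1, by omega, by omega, rfl⟩),
        (N1 - q - 1) * M, Or.inl (Or.inl ⟨N1 - q - 1, by omega, by omega, rfl⟩),
        by linear_combination hdiv + hM2 - hm⟩
end

section
/- Let M ≥ 6 be an even integer and N1 ≥ 2. Define P_a1 = {kM : 0 ≤ k ≤ N1−1}, P_a2 = {N1·M − M/2 − 1 + j : 1 ≤ j ≤ M/2}, P_a3 = {N1·M + j : 1 ≤ j ≤ M/2 − 1}, and P = P_a1 ∪ P_a2 ∪ P_a3. Then the sum set S = {u + v : u, v ∈ P} contains every integer n with N1·M − M/2 ≤ n ≤ 2·N1·M + M − 2. -/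
theorem stmt1 (M N1 : ℤ) (hM : 6 ≤ M) (hMe : Even M) (hN1 : 2 ≤ N1) :
    ∀ n : ℤ, N1 * M - M / 2 ≤ n → n ≤ 2 * N1 * M + M - 2 →
      n ∈ sumSet (AULAs M N1) := by
  intro n hn1 hn2
  obtain ⟨h, hMh⟩ := hMe
  have hM2 : M / 2 = h := by omega
  rw [hM2] at hn1
  have memA : ∀ k : ℤ, 0 ≤ k → k ≤ N1 - 1 → k * M ∈ AULAs M N1 :=
    fun k a b => Or.inl (Or.inl ⟨k, a, b, rfl⟩)
  have memB : ∀ x : ℤ, N1 * M - h ≤ x → x ≤ N1 * M - 1 → x ∈ AULAs M N1 := by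
    intro x hx1 hx2
    exact Or.inl (Or.inr ⟨x - (N1 * M - M / 2 - 1), by omega, by omega, by ring⟩)
  have memC : ∀ x : ℤ, N1 * M + 1 ≤ x → x ≤ N1 * M + h - 1 → x ∈ AULAs M N1 := by
    intro x hx1 hx2
    exact Or.inr ⟨x - N1 * M, by omega, by omega, by ring⟩
  have hQ2 : 2 * N1 * M = N1 * M + N1 * M := by ring
  by_cases hc : n ≤ 2 * N1 * M - h - 1
  · -- use division by M
    have hM0 : (0:ℤ) < M := by omega
    set t := n - (N1 * M - h) with ht
    have ht0 : 0 ≤ t := by omega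
    set k := t / M with hk
    set r := t % M with hr
    have hr0 : 0 ≤ r := Int.emod_nonneg t (by omega)
    have hrM : r < M := Int.emod_lt_of_pos t hM0
    have htkr : M * k + r = t := Int.mul_ediv_add_emod t M
    have hk0 : 0 ≤ k := Int.ediv_nonneg ht0 (le_of_lt hM0)
    have htle : t ≤ N1 * M - 1 := by simp only [ht]; linarith
    have hkN : k ≤ N1 - 1 := by
      by_contra hcon
      push_neg at hcon
      have : N1 * M ≤ k * M := by
        have := mul_le_mul_of_nonneg_right (show N1 ≤ k by omega) (le_of_lt hM0)
        linarith
      linarith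
    rcases lt_trichotomy r h with hr1 | hr1 | hr1
    · refine ⟨k * M, memA k hk0 hkN, N1 * M - h + r, memB _ (by omega) (by omega), ?_⟩
      linarith
    · -- r = h, n = N1*M + k*M
      by_cases hk2 : k ≤ N1 - 2
      · refine ⟨(N1 - 1) * M, memA _ (by omega) (by omega),
          (k + 1) * M, memA _ (by omega) (by omega), ?_⟩
        have : n = N1 * M - h + (M * k + r) := by omega
        rw [this, hr1]; ring
      · -- k = N1 - 1, n = 2*N1*M - 2*h
        have hkeq : k = N1 - 1 := by omega
        have hneq : n = 2 * N1 * M - 2 * h := by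
          have : n = N1 * M - h + (M * k + r) := by omega
          rw [this, hr1, hkeq, hMh]; ring
        refine ⟨N1 * M - h, memB _ (by omega) (by omega),
          N1 * M - h, memB _ (by omega) (by omega), ?_⟩
        linarith
    · refine ⟨k * M, memA k hk0 hkN, N1 * M + (r - h), memC _ (by omega) (by omega), ?_⟩
      linarith
  · push_neg at hc
    by_cases h2 : n ≤ 2 * N1 * M - 2
    · exact ⟨N1 * M - 1, memB _ (by omega) (by omega),
        n - N1 * M + 1, memB _ (by linarith) (by linarith), by ring⟩
    by_cases h3 : n = 2 * N1 * M - 1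
    · exact ⟨N1 * M - h, memB _ (by omega) (by omega),
        N1 * M + h - 1, memC _ (by omega) (by omega), by linarith⟩
    by_cases h4 : n ≤ 2 * N1 * M + h - 2
    · exact ⟨N1 * M - 1, memB _ (by omega) (by omega),
        n - N1 * M + 1, memC _ (by omega) (by omega), by ring⟩
    by_cases h5 : n = 2 * N1 * M + h - 1
    · exact ⟨N1 * M + h - 2, memC _ (by omega) (by omega),
        N1 * M + 1, memC _ (by omega) (by omega), by linarith⟩
    · exact ⟨N1 * M + h - 1, memC _ (by omega) (by omega),
        n - N1 * M - h + 1, memC _ (by omega) (by omega), by ring⟩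
end

section
/- Let M ≥ 6 be an even integer and N1 ≥ 2, and let P be the AULAs position set P = {kM : 0 ≤ k ≤ N1−1} ∪ {N1·M − M/2 − 1 + j : 1 ≤ j ≤ M/2} ∪ {N1·M + j : 1 ≤ j ≤ M/2 − 1}. Define the sum-difference co-array SDC = {u − v : u,v ∈ P} ∪ {u + v : u,v ∈ P} ∪ {−u − v : u,v ∈ P}. Then SDC contains every integer n with |n| ≤ 2·N1·M + M − 2; in particular SDC is a hole-free set of cardinality at least 4·N1·M + 2M − 3 within this range. -/
lemma memA_aux {M N1 : ℤ} (k : ℤ) (h0 : 0 ≤ k) (h1 : k ≤ N1 - 1) :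
    k * M ∈ AULAs M N1 := by
  simp only [AULAs, Set.mem_union, Set.mem_setOf_eq]
  exact Or.inl (Or.inl ⟨k, h0, h1, rfl⟩)

lemma memBC_aux {M N1 : ℤ} (hM2 : M % 2 = 0) (hM : 6 ≤ M) (r : ℤ)
    (h1 : -(M / 2) ≤ r) (h2 : r ≤ M / 2 - 1) (h3 : r ≠ 0) :
    N1 * M + r ∈ AULAs M N1 := by
  simp only [AULAs, Set.mem_union, Set.mem_setOf_eq]
  rcases lt_or_gt_of_ne h3 with h | h
  · exact Or.inl (Or.inr ⟨r + M / 2 + 1, by omega, by omega, by ring⟩)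
  · exact Or.inr ⟨r, by omega, h2, rfl⟩

lemma pos_mem_aux (M N1 : ℤ) (hM : 6 ≤ M) (hM2 : M % 2 = 0) (hN1 : 2 ≤ N1)
    (n : ℤ) (h0 : 0 ≤ n) (hn : n ≤ 2 * N1 * M + M - 2) :
    ∃ u ∈ AULAs M N1, ∃ v ∈ AULAs M N1, n = u - v ∨ n = u + v := by
  obtain ⟨m, hm⟩ : ∃ m, M = 2 * m := ⟨M / 2, by omega⟩
  have hm3 : 3 ≤ m := by omega
  obtain ⟨K, hK⟩ : ∃ K, K = N1 * M := ⟨_, rfl⟩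
  have memBC' : ∀ r : ℤ, -m ≤ r → r ≤ m - 1 → r ≠ 0 → K + r ∈ AULAs M N1 := by
    intro r h1 h2 h3
    have := memBC_aux (N1 := N1) hM2 hM r (by omega) (by omega) h3
    rwa [← hK] at this
  have hn' : n ≤ 2 * K + 2 * m - 2 := by
    have : (2:ℤ) * N1 * M = 2 * K := by rw [hK]; ring
    linarith
  by_cases hA : n ≤ m - 1
  · exact ⟨K + (n - m), memBC' _ (by omega) (by omega) (by omega),
      K + (-m), memBC' _ (by omega) (by omega) (by omega), Or.inl (by ring)⟩
  push_neg at hA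
  by_cases hC : 2 * K - m ≤ n
  · -- top sums: n = (K + a) + (K + b)
    by_cases c1 : n - 2 * K ≤ -1
    · by_cases c0 : n - 2 * K = -m
      · exact ⟨K + (-m + 1), memBC' _ (by omega) (by omega) (by omega),
          K + (-1), memBC' _ (by omega) (by omega) (by omega), Or.inr (by omega)⟩
      · exact ⟨K + (n - 2 * K - 1), memBC' _ (by omega) (by omega) (by omega),
          K + 1, memBC' _ (by omega) (by omega) (by omega), Or.inr (by omega)⟩
    · by_cases c2 : n - 2 * K ≤ m - 2
      · exact ⟨K + (n - 2 * K + 1), memBC' _ (by omega) (by omega) (by omega),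
          K + (-1), memBC' _ (by omega) (by omega) (by omega), Or.inr (by omega)⟩
      · by_cases c3 : n - 2 * K = m - 1
        · exact ⟨K + (m - 2), memBC' _ (by omega) (by omega) (by omega),
            K + 1, memBC' _ (by omega) (by omega) (by omega), Or.inr (by omega)⟩
        · exact ⟨K + (m - 1), memBC' _ (by omega) (by omega) (by omega),
            K + (n - 2 * K - m + 1), memBC' _ (by omega) (by omega) (by omega),
            Or.inr (by omega)⟩
  push_neg at hC
  -- middle region: m ≤ n ≤ 2K - m - 1
  have hMpos : (0:ℤ) < M := by omega
  obtain ⟨q, e, hqe, he1, he2⟩ : ∃ q e, M * q + e = n + m ∧ 0 ≤ e ∧ e < M :=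
    ⟨(n + m) / M, (n + m) % M, Int.mul_ediv_add_emod _ _, Int.emod_nonneg _ (by omega),
      Int.emod_lt_of_pos _ hMpos⟩
  have hq1 : 1 ≤ q := by
    by_contra h
    push_neg at h
    have h1 : M * q ≤ 0 := mul_nonpos_iff.mpr (Or.inl ⟨hMpos.le, by omega⟩)
    linarith
  have hq2 : q ≤ 2 * N1 - 1 := by
    by_contra h
    push_neg at h
    have h1 : M * (2 * N1) ≤ M * q := mul_le_mul_of_nonneg_left (by omega) hMpos.le
    have h2 : (2:ℤ) * N1 * M = 2 * K := by rw [hK]; ring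
    nlinarith
  by_cases hr : e = m
  · -- n = q * M
    rcases lt_or_ge q N1 with hq | hq
    · exact ⟨q * M, memA_aux q (by omega) (by omega),
        0 * M, memA_aux 0 (by omega) (by omega),
        Or.inl (by linear_combination -hqe + hr)⟩
    · rcases eq_or_lt_of_le hq with hq' | hq'
      · exact ⟨(N1 - 1) * M, memA_aux _ (by omega) (by omega),
          1 * M, memA_aux 1 (by omega) (by omega),
          Or.inr (by linear_combination -hqe + hr - M * hq')⟩
      · rcases lt_or_ge q (2 * N1 - 1) with hq'' | hq''
        · exact ⟨(N1 - 1) * M, memA_aux _ (by omega) (by omega),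
            (q - N1 + 1) * M, memA_aux _ (by omega) (by omega),
            Or.inr (by linear_combination -hqe + hr)⟩
        · have hq3 : q = 2 * N1 - 1 := by omega
          exact ⟨K + (-m), memBC' _ (by omega) (by omega) (by omega),
            K + (-m), memBC' _ (by omega) (by omega) (by omega),
            Or.inr (by linear_combination -hqe + hr - 2 * hK + M * hq3 - hm)⟩
  · rcases le_or_gt q N1 with hq | hq
    · exact ⟨K + (e - m), memBC' _ (by omega) (by omega) (by omega),
        (N1 - q) * M, memA_aux _ (by omega) (by omega),
        Or.inl (by linear_combination -hK - hqe)⟩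
    · exact ⟨K + (e - m), memBC' _ (by omega) (by omega) (by omega),
        (q - N1) * M, memA_aux _ (by omega) (by omega),
        Or.inr (by linear_combination -hK - hqe)⟩

theorem stmt2 (M N1 : ℤ) (hM : 6 ≤ M) (hMe : Even M) (hN1 : 2 ≤ N1) :
    (∀ n : ℤ, |n| ≤ 2 * N1 * M + M - 2 → n ∈ SDC (AULAs M N1)) ∧
    (4 * N1 * M + 2 * M - 3 : ℤ) ≤
      ((SDC (AULAs M N1) ∩
        Set.Icc (-(2 * N1 * M + M - 2)) (2 * N1 * M + M - 2)).ncard : ℤ) := by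
  have hM2 : M % 2 = 0 := Int.even_iff.mp hMe
  have key := pos_mem_aux M N1 hM hM2 hN1
  have part1 : ∀ n : ℤ, |n| ≤ 2 * N1 * M + M - 2 → n ∈ SDC (AULAs M N1) := by
    intro n hn
    rcases le_or_gt 0 n with h | h
    · obtain ⟨u, hu, v, hv, hd | hs⟩ := key n h (by rwa [abs_of_nonneg h] at hn)
      · exact Or.inl (Or.inl ⟨u, hu, v, hv, hd⟩)
      · exact Or.inl (Or.inr ⟨u, hu, v, hv, hs⟩)
    · obtain ⟨u, hu, v, hv, hd | hs⟩ := key (-n) (by omega)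
        (by rw [abs_of_neg h] at hn; omega)
      · exact Or.inl (Or.inl ⟨v, hv, u, hu, by omega⟩)
      · exact Or.inr ⟨u, hu, v, hv, by omega⟩
  refine ⟨part1, ?_⟩
  have hL : (0:ℤ) ≤ 2 * N1 * M + M - 2 := by nlinarith
  have heq : SDC (AULAs M N1) ∩
      Set.Icc (-(2 * N1 * M + M - 2)) (2 * N1 * M + M - 2) =
      Set.Icc (-(2 * N1 * M + M - 2)) (2 * N1 * M + M - 2) :=
    Set.inter_eq_right.mpr (fun n hn => part1 n (abs_le.mpr ⟨hn.1, hn.2⟩))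
  rw [heq, ← Finset.coe_Icc, Set.ncard_coe_finset, Int.card_Icc]
  rw [Int.toNat_of_nonneg (by linarith)]
  linarith
end

section
/- Let M ≥ 6 be an even integer and N1 ≥ 2. Define the SAULAs position set P = {M/2 + kM : 0 ≤ k ≤ N1−1} ∪ {N1·M − 1 + j : 1 ≤ j ≤ M/2} ∪ {N1·M + M/2 + j : 1 ≤ j ≤ M/2 − 1}. Then the difference set {u − v : u,v ∈ P} contains every integer n with 0 ≤ n ≤ N1·M + M/2 − 1 except n = N1·M, and the sum set {u + v : u,v ∈ P} contains every integer n with N1·M + M/2 ≤ n ≤ 2·N1·M + 2M − 2 as well as the element N1·M. -/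
theorem stmt3 (M N1 : ℤ) (hM : 6 ≤ M) (hMe : Even M) (hN1 : 2 ≤ N1) :
    (∀ n : ℤ, 0 ≤ n → n ≤ N1 * M + M / 2 - 1 → n ≠ N1 * M →
      n ∈ diffSet (SAULAs M N1)) ∧
    (∀ n : ℤ, N1 * M + M / 2 ≤ n → n ≤ 2 * N1 * M + 2 * M - 2 →
      n ∈ sumSet (SAULAs M N1)) ∧
    N1 * M ∈ sumSet (SAULAs M N1) := by
  obtain ⟨H, hHdef⟩ := hMe
  have hMH : M = 2 * H := by omega
  have hH2 : M / 2 = H := by omega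
  have hH3 : 3 ≤ H := by omega
  have hM0 : (0:ℤ) < M := by omega
  have memA : ∀ k : ℤ, 0 ≤ k → k ≤ N1 - 1 → H + k * M ∈ SAULAs M N1 := by
    intro k h0 h1
    exact Or.inl (Or.inl ⟨k, h0, h1, by rw [hH2]⟩)
  have memB : ∀ j : ℤ, 1 ≤ j → j ≤ H → N1 * M - 1 + j ∈ SAULAs M N1 := by
    intro j h0 h1
    exact Or.inl (Or.inr ⟨j, h0, by omega, rfl⟩)
  have memC : ∀ j : ℤ, 1 ≤ j → j ≤ H - 1 → N1 * M + H + j ∈ SAULAs M N1 := by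
    intro j h0 h1
    exact Or.inr ⟨j, h0, by omega, by rw [hH2]⟩
  refine ⟨?_, ?_, ?_⟩
  · -- difference set part
    intro n hn0 hn1 hne
    rw [hH2] at hn1
    obtain ⟨q, r, hmul, hr0, hrM⟩ : ∃ q r, M * q + r = n ∧ 0 ≤ r ∧ r < M :=
      ⟨n / M, n % M, Int.mul_ediv_add_emod n M, Int.emod_nonneg n (by omega),
        Int.emod_lt_of_pos n hM0⟩
    have hq0 : 0 ≤ q := by
      by_contra h
      have h' : M * q ≤ M * (-1) :=
        mul_le_mul_of_nonneg_left (by omega) hM0.le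
      linarith
    have hqN : q ≤ N1 := by
      have h : M * q < M * (N1 + 1) := by nlinarith
      have := lt_of_mul_lt_mul_left h hM0.le
      omega
    by_cases hc0 : r = 0
    · subst hc0
      have hqne : q ≠ N1 := by
        rintro rfl
        exact hne (by linarith [mul_comm M q])
      exact ⟨H + q * M, memA q hq0 (by omega), H + 0 * M, memA 0 le_rfl (by omega),
        by linarith⟩
    · by_cases hcH : r ≤ H - 1
      · by_cases hq0' : q = 0
        · subst hq0'
          exact ⟨N1 * M - 1 + (r + 1), memB (r + 1) (by omega) (by omega),
            N1 * M - 1 + 1, memB 1 le_rfl (by omega), by linarith⟩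
        · exact ⟨N1 * M + H + r, memC r (by omega) (by omega),
            H + (N1 - q) * M, memA (N1 - q) (by omega) (by omega), by linarith⟩
      · have hq' : q ≤ N1 - 1 := by
          have h : M * q < M * N1 := by nlinarith
          have := lt_of_mul_lt_mul_left h hM0.le
          omega
        exact ⟨N1 * M - 1 + (r - H + 1), memB (r - H + 1) (by omega) (by omega),
          H + (N1 - 1 - q) * M, memA (N1 - 1 - q) (by omega) (by omega), by linarith⟩
  · -- sum set part
    intro n hn0 hn1
    rw [hH2] at hn0
    obtain ⟨q, r, hmul, hr0, hrM⟩ : ∃ q r, M * q + r = n ∧ 0 ≤ r ∧ r < M :=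
      ⟨n / M, n % M, Int.mul_ediv_add_emod n M, Int.emod_nonneg n (by omega),
        Int.emod_lt_of_pos n hM0⟩
    have hqN1 : N1 ≤ q := by
      have h : M * (N1 - 1) < M * q := by nlinarith
      have := lt_of_mul_lt_mul_left h hM0.le
      omega
    have hq2 : q ≤ 2 * N1 + 1 := by
      have h : M * q < M * (2 * N1 + 2) := by nlinarith
      have := lt_of_mul_lt_mul_left h hM0.le
      omega
    by_cases hc0 : r = 0
    · subst hc0
      have hq1 : N1 + 1 ≤ q := by
        have h : M * N1 < M * q := by nlinarith
        have := lt_of_mul_lt_mul_left h hM0.le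
        omega
      by_cases hA : q ≤ 2 * N1 - 1
      · exact ⟨H + (q - N1) * M, memA (q - N1) (by omega) (by omega),
          H + (N1 - 1) * M, memA (N1 - 1) (by omega) (by omega), by linarith⟩
      · by_cases hB : q = 2 * N1
        · subst hB
          exact ⟨N1 * M - 1 + 1, memB 1 le_rfl (by omega),
            N1 * M - 1 + 1, memB 1 le_rfl (by omega), by linarith⟩
        · have hq' : q = 2 * N1 + 1 := by omega
          subst hq'
          exact ⟨N1 * M - 1 + 2, memB 2 (by omega) (by omega),
            N1 * M + H + (H - 1), memC (H - 1) (by omega) le_rfl, by linarith⟩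
    · by_cases hcH : r ≤ H - 1
      · have hq1 : N1 + 1 ≤ q := by
          by_contra h
          have hq' : q = N1 := by omega
          subst hq'
          nlinarith
        by_cases hq2' : q ≤ 2 * N1
        · exact ⟨N1 * M + H + r, memC r (by omega) (by omega),
            H + (q - N1 - 1) * M, memA (q - N1 - 1) (by omega) (by omega), by linarith⟩
        · have hq' : q = 2 * N1 + 1 := by omega
          subst hq'
          by_cases hr1 : r = 1
          · subst hr1
            exact ⟨N1 * M - 1 + 3, memB 3 (by omega) (by omega),
              N1 * M + H + (H - 1), memC (H - 1) (by omega) le_rfl, by linarith⟩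
          · exact ⟨N1 * M + H + 1, memC 1 le_rfl (by omega),
              N1 * M + H + (r - 1), memC (r - 1) (by omega) (by omega), by linarith⟩
      · by_cases hqa : q ≤ 2 * N1 - 1
        · exact ⟨N1 * M - 1 + (r - H + 1), memB (r - H + 1) (by omega) (by omega),
            H + (q - N1) * M, memA (q - N1) (by omega) (by omega), by linarith⟩
        · by_cases hqb : q = 2 * N1
          · subst hqb
            by_cases hrm : r = M - 1
            · subst hrm
              exact ⟨N1 * M - 1 + 1, memB 1 le_rfl (by omega),
                N1 * M + H + (H - 1), memC (H - 1) (by omega) le_rfl, by linarith⟩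
            · exact ⟨N1 * M - 1 + H, memB H (by omega) le_rfl,
                N1 * M - 1 + (r + 2 - H), memB (r + 2 - H) (by omega) (by omega),
                by linarith⟩
          · have hq' : q = 2 * N1 + 1 := by omega
            subst hq'
            have hrb : r ≤ M - 2 := by nlinarith
            exact ⟨N1 * M + H + (H - 1), memC (H - 1) (by omega) le_rfl,
              N1 * M + H + (r - H + 1), memC (r - H + 1) (by omega) (by omega),
              by linarith⟩
  · exact ⟨H + 0 * M, memA 0 le_rfl (by omega),
      H + (N1 - 1) * M, memA (N1 - 1) (by omega) (by omega), by linarith⟩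
end

section
/- Let M ≥ 6 be an even integer and N1 ≥ 2, and let P be the SAULAs position set P = {M/2 + kM : 0 ≤ k ≤ N1−1} ∪ {N1·M − 1 + j : 1 ≤ j ≤ M/2} ∪ {N1·M + M/2 + j : 1 ≤ j ≤ M/2 − 1}. Then the sum-difference co-array SDC = {u−v} ∪ {u+v} ∪ {−u−v} (over u,v ∈ P) contains every integer n with |n| ≤ 2·N1·M + 2M − 2, giving at least 4·N1·M + 4M − 3 consecutive lags. -/
lemma memA' {m N1 k : ℤ} (h1 : 0 ≤ k) (h2 : k ≤ N1 - 1) :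
    m + k * (2 * m) ∈ SAULAs (2 * m) N1 :=
  Or.inl (Or.inl ⟨k, h1, h2, by rw [show (2*m)/2 = m from by omega]⟩)

lemma memB' {m N1 j : ℤ} (h1 : 1 ≤ j) (h2 : j ≤ m) :
    N1 * (2 * m) - 1 + j ∈ SAULAs (2 * m) N1 :=
  Or.inl (Or.inr ⟨j, h1, by omega, rfl⟩)

lemma memC' {m N1 j : ℤ} (h1 : 1 ≤ j) (h2 : j ≤ m - 1) :
    N1 * (2 * m) + m + j ∈ SAULAs (2 * m) N1 :=
  Or.inr ⟨j, h1, by omega, by rw [show (2*m)/2 = m from by omega]⟩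

lemma sdc_diff {P : Set ℤ} {u v n : ℤ} (hu : u ∈ P) (hv : v ∈ P) (h : n = u - v) :
    n ∈ SDC P := Or.inl (Or.inl ⟨u, hu, v, hv, h⟩)

lemma sdc_sum {P : Set ℤ} {u v n : ℤ} (hu : u ∈ P) (hv : v ∈ P) (h : n = u + v) :
    n ∈ SDC P := Or.inl (Or.inr ⟨u, hu, v, hv, h⟩)

lemma sdc_neg {P : Set ℤ} {u v n : ℤ} (hu : u ∈ P) (hv : v ∈ P) (h : n = -u - v) :
    n ∈ SDC P := Or.inr ⟨u, hu, v, hv, h⟩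

lemma sdc_symm {P : Set ℤ} {n : ℤ} (h : n ∈ SDC P) : -n ∈ SDC P := by
  rcases h with ((⟨u, hu, v, hv, h⟩ | ⟨u, hu, v, hv, h⟩) | ⟨u, hu, v, hv, h⟩)
  · exact sdc_diff hv hu (by omega)
  · exact sdc_neg hu hv (by omega)
  · exact sdc_sum hu hv (by omega)

lemma cover (m N1 : ℤ) (hm : 3 ≤ m) (hN1 : 2 ≤ N1) (n : ℤ)
    (h0 : 0 ≤ n) (h1 : n ≤ 4*N1*m + 4*m - 2) : n ∈ SDC (SAULAs (2*m) N1) := by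
  rcases lt_or_ge n m with c1 | c1
  · -- 0 ≤ n ≤ m-1 : B - B
    exact sdc_diff (memB' (j := n+1) (by linarith) (by linarith))
      (memB' (j := 1) (by linarith) (by linarith)) (by linarith)
  rcases lt_or_ge n (2*m) with c2 | c2
  · -- m ≤ n ≤ 2m-1 : C - B
    rcases eq_or_lt_of_le c1 with he | hlt
    · exact sdc_diff (memC' (j := 1) (by linarith) (by linarith))
        (memB' (j := 2) (by linarith) (by linarith)) (by linarith)
    · exact sdc_diff (memC' (j := n - m) (by linarith) (by linarith))
        (memB' (j := 1) (by linarith) (by linarith)) (by linarith)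
  rcases lt_or_ge n (4*N1*m + m) with c3 | c3
  · -- middle range: use division by 2m
    obtain ⟨t, r, hr0, hr1, hnt⟩ : ∃ t r, 0 ≤ r ∧ r < 2*m ∧ n + m = 2*m*t + r :=
      ⟨(n+m)/(2*m), (n+m) % (2*m), Int.emod_nonneg _ (by omega),
        Int.emod_lt_of_pos _ (by omega), (Int.mul_ediv_add_emod _ _).symm⟩
    rcases lt_or_ge n (2*N1*m + m) with c4 | c4
    · -- 2m ≤ n ≤ 2*N1*m + m - 1 : differences with A
      have ht1 : 1 ≤ t := by
        by_contra h
        push_neg at h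
        have h2 : 2*m*t ≤ 2*m*0 := mul_le_mul_of_nonneg_left (by omega) (by linarith)
        linarith
      have ht2 : t ≤ N1 := by
        by_contra h
        push_neg at h
        have h2 : 2*m*(N1+1) ≤ 2*m*t := mul_le_mul_of_nonneg_left (by omega) (by linarith)
        linarith
      rcases lt_trichotomy r m with hrm | hrm | hrm
      · exact sdc_diff (memB' (j := r+1) (by linarith) (by linarith))
          (memA' (k := N1 - t) (by linarith) (by linarith)) (by linarith)
      · exact sdc_sum (memA' (k := t-1) (by linarith) (by linarith))
          (memA' (k := 0) (by linarith) (by linarith)) (by linarith)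
      · exact sdc_diff (memC' (j := r - m) (by linarith) (by linarith))
          (memA' (k := N1 - t) (by linarith) (by linarith)) (by linarith)
    · -- 2*N1*m + m ≤ n ≤ 4*N1*m + m - 1 : sums with A
      have ht1 : N1 + 1 ≤ t := by
        by_contra h
        push_neg at h
        have h2 : 2*m*t ≤ 2*m*N1 := mul_le_mul_of_nonneg_left (by omega) (by linarith)
        linarith
      have ht2 : t ≤ 2*N1 := by
        by_contra h
        push_neg at h
        have h2 : 2*m*(2*N1+1) ≤ 2*m*t := mul_le_mul_of_nonneg_left (by omega) (by linarith)
        linarith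
      rcases lt_trichotomy r m with hrm | hrm | hrm
      · exact sdc_sum (memA' (k := t - N1 - 1) (by linarith) (by linarith))
          (memB' (j := r+1) (by linarith) (by linarith)) (by linarith)
      · rcases lt_or_eq_of_le ht2 with ht3 | ht3
        · exact sdc_sum (memA' (k := N1 - 1) (by linarith) (by linarith))
            (memA' (k := t - N1) (by linarith) (by linarith)) (by linarith)
        · subst ht3
          exact sdc_sum (memB' (j := 1) (by linarith) (by linarith))
            (memB' (j := 1) (by linarith) (by linarith)) (by linarith)
      · exact sdc_sum (memA' (k := t - N1 - 1) (by linarith) (by linarith))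
          (memC' (j := r - m) (by linarith) (by linarith)) (by linarith)
  rcases lt_or_ge n (4*N1*m + 2*m - 1) with c5 | c5
  · -- B + B
    exact sdc_sum (memB' (j := m) (by linarith) (by linarith))
      (memB' (j := n - 4*N1*m + 2 - m) (by linarith) (by linarith)) (by linarith)
  rcases lt_or_ge n (4*N1*m + 3*m - 1) with c6 | c6
  · -- B + C
    exact sdc_sum (memB' (j := n - 4*N1*m - 2*m + 2) (by linarith) (by linarith))
      (memC' (j := m - 1) (by linarith) (by linarith)) (by linarith)
  rcases eq_or_lt_of_le c6 with c7 | c7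
  · -- n = 4*N1*m + 3*m - 1 : C + C
    exact sdc_sum (memC' (j := 1) (by linarith) (by linarith))
      (memC' (j := m - 2) (by linarith) (by linarith)) (by linarith)
  · -- C + C
    exact sdc_sum (memC' (j := n - 4*N1*m - 3*m + 1) (by linarith) (by linarith))
      (memC' (j := m - 1) (by linarith) (by linarith)) (by linarith)


theorem stmt4 (M N1 : ℤ) (hM : 6 ≤ M) (hMe : Even M) (hN1 : 2 ≤ N1) :
    (∀ n : ℤ, |n| ≤ 2 * N1 * M + 2 * M - 2 → n ∈ SDC (SAULAs M N1)) ∧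
    (4 * N1 * M + 4 * M - 3 : ℤ) ≤
      ((SDC (SAULAs M N1) ∩
        Set.Icc (-(2 * N1 * M + 2 * M - 2)) (2 * N1 * M + 2 * M - 2)).ncard : ℤ) := by

  obtain ⟨m0, hm0⟩ := hMe
  obtain ⟨m, rfl⟩ : ∃ m, M = 2 * m := ⟨m0, by omega⟩
  have hm : 3 ≤ m := by omega
  have key : ∀ n : ℤ, |n| ≤ 2 * N1 * (2*m) + 2 * (2*m) - 2 → n ∈ SDC (SAULAs (2*m) N1) := by
    intro n hn
    rw [abs_le] at hn
    rcases le_or_gt 0 n with h | h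
    · exact cover m N1 hm hN1 n h (by linarith [hn.2])
    · have h2 := cover m N1 hm hN1 (-n) (by omega) (by linarith [hn.1])
      simpa using sdc_symm h2
  refine ⟨key, ?_⟩
  have hsub : Set.Icc (-(2 * N1 * (2*m) + 2 * (2*m) - 2)) (2 * N1 * (2*m) + 2 * (2*m) - 2)
      ⊆ SDC (SAULAs (2*m) N1) := by
    intro n hn
    rw [Set.mem_Icc] at hn
    exact key n (abs_le.mpr ⟨hn.1, hn.2⟩)
  rw [Set.inter_eq_right.mpr hsub, ← Finset.coe_Icc, Set.ncard_coe_finset, Int.card_Icc]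
  have hNm : 6 ≤ N1 * m := by nlinarith
  rw [Int.toNat_of_nonneg (by linarith)]
  linarith
end

section
/- Let M ≥ 6 be an even integer and N1 ≥ 2, and let P be the TSAULAs position set {M/2 + kM : 0 ≤ k ≤ N1−1} ∪ {N1·M − M/2 + 2j : 1 ≤ j ≤ M/2 − 1} ∪ {−N1·M − M/2 + 1} ∪ {N1·M + M/2 − 1 + 2j : 1 ≤ j ≤ M/2 − 1}. Then no two distinct elements of P differ by exactly 1; i.e., the weight function w(1) = |{(u,v) ∈ P×P : u − v = 1}| equals 0. -/
lemma tsaulas_key (M N1 : ℤ) (hM : 6 ≤ M) (hMe : Even M) (hN1 : 2 ≤ N1) {x : ℤ}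
    (hx : x ∈ TSAULAs M N1) :
    (x % 2 = (M / 2) % 2 ∧ M / 2 ≤ x ∧ x ≤ N1 * M + M / 2 - 2) ∨
    (x % 2 ≠ (M / 2) % 2 ∧ (x = -(N1 * M) - M / 2 + 1 ∨
      (N1 * M + M / 2 + 1 ≤ x ∧ x ≤ N1 * M + M / 2 + M - 3))) := by
  have hM2 : M % 2 = 0 := Int.even_iff.mp hMe
  have hX2 : (N1 * M) % 2 = 0 := Int.even_iff.mp (hMe.mul_left N1)
  have hXM : 2 * M ≤ N1 * M := mul_le_mul_of_nonneg_right hN1 (by omega)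
  rcases hx with ((hx | hx) | hx) | hx
  · obtain ⟨k, hk0, hk1, hxe⟩ := hx
    have ht0 : 0 ≤ k * M := mul_nonneg hk0 (by omega)
    have ht1 : k * M ≤ (N1 - 1) * M :=
      mul_le_mul_of_nonneg_right (by omega) (by omega)
    have ht2 : (k * M) % 2 = 0 := Int.even_iff.mp (hMe.mul_left k)
    have hring : (N1 - 1) * M = N1 * M - M := by ring
    omega
  · obtain ⟨j, hj0, hj1, hxe⟩ := hx
    omega
  · simp only [Set.mem_singleton_iff] at hx
    omega
  · obtain ⟨j, hj0, hj1, hxe⟩ := hx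
    omega

theorem stmt7 (M N1 : ℤ) (hM : 6 ≤ M) (hMe : Even M) (hN1 : 2 ≤ N1) :
    weight (TSAULAs M N1) 1 = 0 := by
  have hM2 : M % 2 = 0 := Int.even_iff.mp hMe
  have hXM : 2 * M ≤ N1 * M := mul_le_mul_of_nonneg_right hN1 (by omega)
  have hS : {p : ℤ × ℤ | p.1 ∈ TSAULAs M N1 ∧ p.2 ∈ TSAULAs M N1 ∧ p.1 - p.2 = 1} = ∅ := by
    ext p
    simp only [Set.mem_setOf_eq, Set.mem_empty_iff_false, iff_false]
    rintro ⟨h1, h2, h3⟩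
    rcases tsaulas_key M N1 hM hMe hN1 h1 with hu | hu <;>
      rcases tsaulas_key M N1 hM hMe hN1 h2 with hv | hv <;> omega
  unfold weight
  rw [hS, Set.ncard_empty]
end

section
/- Let M ≥ 6 be an even integer and N1 ≥ 2, and let P be the TSAULAs position set as defined. Then the weight functions satisfy w(2) = M − 3 and w(3) = 1, where w(f) = |{(u,v) ∈ P×P : u − v = f}|. -/
theorem stmt8 (M N1 : ℤ) (hM : 6 ≤ M) (hMe : Even M) (hN1 : 2 ≤ N1) :
    (weight (TSAULAs M N1) 2 : ℤ) = M - 3 ∧ weight (TSAULAs M N1) 3 = 1 := by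
  obtain ⟨m, rfl⟩ := hMe
  have hm3 : 3 ≤ m := by omega
  have h2 : (m + m) / 2 = m := by omega
  obtain ⟨s, hs, hs2⟩ : ∃ s, N1 * (m + m) = 2 * s ∧ 2 * m ≤ s := by
    refine ⟨N1 * m, by ring, ?_⟩
    nlinarith
  have kfact : ∀ k : ℤ, 0 ≤ k → k ≤ N1 - 1 →
      ∃ t, k * (m + m) = 2 * t ∧ 0 ≤ t ∧ t + m ≤ s ∧ m ∣ t := by
    intro k hk0 hk1
    refine ⟨k * m, by ring, mul_nonneg hk0 (by omega), ?_, dvd_mul_left m k⟩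
    nlinarith [mul_le_mul_of_nonneg_right (show k + 1 ≤ N1 by omega) (show (0:ℤ) ≤ m by omega)]
  -- forward characterization
  have hfwd : ∀ x ∈ TSAULAs (m + m) N1,
      (∃ t, 0 ≤ t ∧ t + m ≤ s ∧ m ∣ t ∧ x = m + 2 * t) ∨
      (∃ j, 1 ≤ j ∧ j ≤ m - 1 ∧ x = 2 * s - m + 2 * j) ∨
      x = -(2 * s) - m + 1 ∨
      (∃ j, 1 ≤ j ∧ j ≤ m - 1 ∧ x = 2 * s + m - 1 + 2 * j) := by
    intro x hx
    simp only [TSAULAs, Set.mem_union, Set.mem_setOf_eq, Set.mem_singleton_iff, h2, hs] at hx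
    rcases hx with (((⟨k, hk0, hk1, hxe⟩ | h) | h) | h)
    · obtain ⟨t, hkt, ht0, ht1, hdvd⟩ := kfact k hk0 hk1
      exact Or.inl ⟨t, ht0, ht1, hdvd, by rw [hxe, hkt]⟩
    · exact Or.inr (Or.inl h)
    · exact Or.inr (Or.inr (Or.inl h))
    · exact Or.inr (Or.inr (Or.inr h))
  have hmemA : (2 * s - m : ℤ) ∈ TSAULAs (m + m) N1 := by
    simp only [TSAULAs, Set.mem_union, Set.mem_setOf_eq, Set.mem_singleton_iff, h2, hs]
    exact Or.inl (Or.inl (Or.inl ⟨N1 - 1, by omega, by omega, by linear_combination -hs⟩))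
  have hmemB : ∀ j : ℤ, 1 ≤ j → j ≤ m - 1 → (2 * s - m + 2 * j) ∈ TSAULAs (m + m) N1 := by
    intro j hj1 hj2
    simp only [TSAULAs, Set.mem_union, Set.mem_setOf_eq, Set.mem_singleton_iff, h2, hs]
    exact Or.inl (Or.inl (Or.inr ⟨j, hj1, by omega, by omega⟩))
  have hmemD : ∀ j : ℤ, 1 ≤ j → j ≤ m - 1 → (2 * s + m - 1 + 2 * j) ∈ TSAULAs (m + m) N1 := by
    intro j hj1 hj2
    simp only [TSAULAs, Set.mem_union, Set.mem_setOf_eq, Set.mem_singleton_iff, h2, hs]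
    exact Or.inr ⟨j, hj1, by omega, by omega⟩
  constructor
  · -- weight 2
    have e2 : {p : ℤ × ℤ | p.1 ∈ TSAULAs (m + m) N1 ∧ p.2 ∈ TSAULAs (m + m) N1 ∧ p.1 - p.2 = 2}
        = ↑(((Finset.Icc 1 (m - 1)).image fun j => ((2 * s - m + 2 * j : ℤ), (2 * s - m + 2 * j - 2 : ℤ))) ∪
            ((Finset.Icc 2 (m - 1)).image fun j => ((2 * s + m - 1 + 2 * j : ℤ), (2 * s + m - 1 + 2 * j - 2 : ℤ)))) := by
      ext ⟨u, v⟩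
      simp only [Set.mem_setOf_eq, Finset.coe_union, Set.mem_union, Finset.coe_image,
        Set.mem_image, Finset.mem_coe, Finset.mem_Icc, Prod.mk.injEq]
      constructor
      · rintro ⟨hu, hv, huv⟩
        rcases hfwd u hu with (⟨t, ht0, ht1, hdvd, rfl⟩ | ⟨j, hj1, hj2, rfl⟩ | rfl | ⟨j, hj1, hj2, rfl⟩) <;>
          rcases hfwd v hv with (⟨t', ht0', ht1', hdvd', rfl⟩ | ⟨j', hj1', hj2', rfl⟩ | rfl | ⟨j', hj1', hj2', rfl⟩)
        -- A-A
        · exfalso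
          obtain ⟨a, rfl⟩ := hdvd
          obtain ⟨a', rfl⟩ := hdvd'
          rcases lt_trichotomy a a' with h | h | h
          · nlinarith [mul_le_mul_of_nonneg_left (show a + 1 ≤ a' by omega) (show (0:ℤ) ≤ m by omega)]
          · subst h; linarith
          · nlinarith [mul_le_mul_of_nonneg_left (show a' + 1 ≤ a by omega) (show (0:ℤ) ≤ m by omega)]
        · exfalso; omega
        · exfalso; omega
        · exfalso; omega
        -- B-*
        · exact Or.inl ⟨j, ⟨by omega, by omega⟩, by omega, by omega⟩
        · exact Or.inl ⟨j, ⟨by omega, by omega⟩, by omega, by omega⟩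
        · exfalso; omega
        · exfalso; omega
        -- C-*
        · exfalso; omega
        · exfalso; omega
        · exfalso; omega
        · exfalso; omega
        -- D-*
        · exfalso; omega
        · exfalso; omega
        · exfalso; omega
        · exact Or.inr ⟨j, ⟨by omega, by omega⟩, by omega, by omega⟩
      · rintro (⟨j, ⟨hj1, hj2⟩, hu, hv⟩ | ⟨j, ⟨hj1, hj2⟩, hu, hv⟩)
        · refine ⟨?_, ?_, by omega⟩
          · rw [← hu]; exact hmemB j hj1 hj2
          · rcases eq_or_ne j 1 with rfl | hne
            · have hv' : v = 2 * s - m := by omega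
              rw [hv']; exact hmemA
            · have hv' : v = 2 * s - m + 2 * (j - 1) := by omega
              rw [hv']; exact hmemB (j - 1) (by omega) (by omega)
        · refine ⟨?_, ?_, by omega⟩
          · rw [← hu]; exact hmemD j (by omega) hj2
          · have hv' : v = 2 * s + m - 1 + 2 * (j - 1) := by omega
            rw [hv']; exact hmemD (j - 1) (by omega) (by omega)
    have hi1 : Function.Injective fun j : ℤ => ((2 * s - m + 2 * j : ℤ), (2 * s - m + 2 * j - 2 : ℤ)) := by
      intro a b h
      have := congrArg Prod.fst h
      simp only at this
      omega
    have hi2 : Function.Injective fun j : ℤ => ((2 * s + m - 1 + 2 * j : ℤ), (2 * s + m - 1 + 2 * j - 2 : ℤ)) := by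
      intro a b h
      have := congrArg Prod.fst h
      simp only at this
      omega
    have hd : Disjoint ((Finset.Icc 1 (m - 1)).image fun j => ((2 * s - m + 2 * j : ℤ), (2 * s - m + 2 * j - 2 : ℤ)))
        ((Finset.Icc 2 (m - 1)).image fun j => ((2 * s + m - 1 + 2 * j : ℤ), (2 * s + m - 1 + 2 * j - 2 : ℤ))) := by
      rw [Finset.disjoint_left]
      rintro p hp1 hp2
      simp only [Finset.mem_image, Finset.mem_Icc] at hp1 hp2
      obtain ⟨a, ha, rfl⟩ := hp1
      obtain ⟨b, hb, hab⟩ := hp2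
      have := congrArg Prod.fst hab
      simp only at this
      omega
    have h1 : weight (TSAULAs (m + m) N1) 2 = (m - 1 + 1 - 1).toNat + (m - 1 + 1 - 2).toNat := by
      rw [weight, e2, Set.ncard_coe_finset, Finset.card_union_of_disjoint hd,
        Finset.card_image_of_injective _ hi1, Finset.card_image_of_injective _ hi2,
        Int.card_Icc, Int.card_Icc]
    rw [h1]
    push_cast
    omega
  · -- weight 3
    have e3 : {p : ℤ × ℤ | p.1 ∈ TSAULAs (m + m) N1 ∧ p.2 ∈ TSAULAs (m + m) N1 ∧ p.1 - p.2 = 3}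
        = {((2 * s + m + 1 : ℤ), (2 * s + m - 2 : ℤ))} := by
      ext ⟨u, v⟩
      simp only [Set.mem_setOf_eq, Set.mem_singleton_iff, Prod.mk.injEq]
      constructor
      · rintro ⟨hu, hv, huv⟩
        rcases hfwd u hu with (⟨t, ht0, ht1, hdvd, rfl⟩ | ⟨j, hj1, hj2, rfl⟩ | rfl | ⟨j, hj1, hj2, rfl⟩) <;>
          rcases hfwd v hv with (⟨t', ht0', ht1', hdvd', rfl⟩ | ⟨j', hj1', hj2', rfl⟩ | rfl | ⟨j', hj1', hj2', rfl⟩) <;>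
          constructor <;> omega
      · rintro ⟨rfl, rfl⟩
        refine ⟨?_, ?_, by ring⟩
        · have : (2 * s + m + 1 : ℤ) = 2 * s + m - 1 + 2 * 1 := by ring
          rw [this]; exact hmemD 1 le_rfl (by omega)
        · have : (2 * s + m - 2 : ℤ) = 2 * s - m + 2 * (m - 1) := by ring
          rw [this]; exact hmemB (m - 1) (by omega) le_rfl
    rw [weight, e3, Set.ncard_singleton]
end

section
/- Let M ≥ 6 be an even integer and N1 ≥ 2, and let P be the Co-TSAULAs position set as defined. Then the weight function w(1) = |{(u,v) ∈ P×P : u − v = 1}| equals exactly 1. -/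
lemma mul_tri' (a b M : ℤ) (hM : 0 < M) :
    a * M = b * M ∨ a * M + M ≤ b * M ∨ b * M + M ≤ a * M := by
  rcases lt_trichotomy a b with h | h | h
  · right; left; nlinarith
  · left; rw [h]
  · right; right; nlinarith

theorem stmt10 (M N1 : ℤ) (hM : 6 ≤ M) (hMe : Even M) (hN1 : 2 ≤ N1) :
    weight (CoTSAULAs M N1) 1 = 1 := by
  obtain ⟨m, hm⟩ := hMe
  have hNM : 2 * M ≤ N1 * M := by nlinarith
  have hset : {p : ℤ × ℤ | p.1 ∈ CoTSAULAs M N1 ∧ p.2 ∈ CoTSAULAs M N1 ∧ p.1 - p.2 = 1}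
      = {(N1 * M + 3 * M / 2 - 2, N1 * M + 3 * M / 2 - 3)} := by
    ext ⟨u, v⟩
    simp only [CoTSAULAs, TSAULAs, Set.mem_union, Set.mem_setOf_eq, Set.mem_singleton_iff,
      Prod.mk.injEq]
    constructor
    · rintro ⟨hu, hv, huv⟩
      rcases hu with ((((⟨k, hk1, hk2, rfl⟩ | ⟨j, hj1, hj2, rfl⟩) | rfl) | ⟨j, hj1, hj2, rfl⟩) | rfl) <;>
        rcases hv with ((((⟨k', hk1', hk2', rfl⟩ | ⟨j', hj1', hj2', rfl⟩) | hv) | ⟨j', hj1', hj2', rfl⟩) | hv) <;>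
        try (have hA : 0 ≤ k * M ∧ k * M ≤ N1 * M - M :=
          ⟨mul_nonneg hk1 (by omega), by nlinarith⟩)
      all_goals try (have hA' : 0 ≤ k' * M ∧ k' * M ≤ N1 * M - M :=
          ⟨mul_nonneg hk1' (by omega), by nlinarith⟩)
      all_goals try (have htr := mul_tri' k k' M (by omega))
      all_goals omega
    · rintro ⟨rfl, rfl⟩
      exact ⟨Or.inr rfl, Or.inl (Or.inr ⟨M / 2 - 1, by omega, by omega, by omega⟩), by omega⟩
  unfold weight
  rw [hset]
  exact Set.ncard_singleton _
end

section
/- Let M ≥ 6 be even, N1 ≥ 2, and set P_a1 = {kM : 0 ≤ k ≤ N1−1}, P_a2 = {N1·M − M/2 − 1 + j : 1 ≤ j ≤ M/2}, P_a3 = {N1·M + j : 1 ≤ j ≤ M/2 − 1}. Then the set of holes of (P_a2 − P_a1) ∩ [0, N1·M − 1], i.e. the integers in [0, N1·M − 1] not of the form u − v with u ∈ P_a2, v ∈ P_a1, is exactly {kM + r : 0 ≤ k ≤ N1−1, 0 ≤ r ≤ M/2 − 1}. -/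
theorem stmt11 (M N1 : ℤ) (hM : 6 ≤ M) (hMe : Even M) (hN1 : 2 ≤ N1) :
    {n : ℤ | 0 ≤ n ∧ n ≤ N1 * M - 1 ∧
        ¬ ∃ u ∈ {x : ℤ | ∃ j, 1 ≤ j ∧ j ≤ M / 2 ∧ x = N1 * M - M / 2 - 1 + j},
          ∃ v ∈ {x : ℤ | ∃ k, 0 ≤ k ∧ k ≤ N1 - 1 ∧ x = k * M}, n = u - v} =
      {n : ℤ | ∃ k r : ℤ, 0 ≤ k ∧ k ≤ N1 - 1 ∧ 0 ≤ r ∧ r ≤ M / 2 - 1 ∧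
        n = k * M + r} := by
  obtain ⟨m, rfl⟩ := hMe
  have hm3 : 3 ≤ m := by omega
  have hdiv : (m + m) / 2 = m := by omega
  ext n
  simp only [Set.mem_setOf_eq, hdiv]
  constructor
  · rintro ⟨hn0, hn1, hrep⟩
    set M : ℤ := m + m with hMdef
    have hMpos : (0:ℤ) < M := by omega
    have hde : M * (n / M) + n % M = n := Int.mul_ediv_add_emod n M
    have hr0 : 0 ≤ n % M := Int.emod_nonneg n (by omega)
    have hrlt : n % M < M := Int.emod_lt_of_pos n hMpos
    have hk0 : 0 ≤ n / M := Int.ediv_nonneg hn0 (by omega)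
    have hk1 : n / M ≤ N1 - 1 := by
      by_contra h
      push_neg at h
      have hk : N1 ≤ n / M := by omega
      have : N1 * M ≤ (n / M) * M := mul_le_mul_of_nonneg_right hk (le_of_lt hMpos)
      nlinarith
    refine ⟨n / M, n % M, hk0, hk1, hr0, ?_, ?_⟩
    · by_contra h
      push_neg at h
      have hge : m ≤ n % M := by omega
      exact hrep ⟨N1 * M - m - 1 + (n % M - m + 1),
        ⟨n % M - m + 1, by omega, by omega, rfl⟩,
        (N1 - 1 - n / M) * M,
        ⟨N1 - 1 - n / M, by omega, by omega, rfl⟩,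
        by linear_combination -hde⟩
    · linear_combination -hde
  · rintro ⟨k, r, hk0, hk1, hr0, hr1, rfl⟩
    have h1 : 0 ≤ k * (m + m) := mul_nonneg hk0 (by omega)
    have h2 : k * (m + m) ≤ (N1 - 1) * (m + m) :=
      mul_le_mul_of_nonneg_right hk1 (by omega)
    refine ⟨by linarith, by nlinarith, ?_⟩
    rintro ⟨u, ⟨j, hj1, hj2, rfl⟩, v, ⟨k', hk'0, hk'1, rfl⟩, heq⟩
    set t : ℤ := k + k' - N1 with ht
    have hteq : t * (m + m) = -m - 1 + j - r := by linear_combination heq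
    rcases lt_trichotomy t 0 with h | h | h
    · have : t * (m + m) ≤ (-1) * (m + m) :=
        mul_le_mul_of_nonneg_right (by omega) (by omega)
      linarith
    · rw [h] at hteq; linarith
    · have : (1:ℤ) * (m + m) ≤ t * (m + m) :=
        mul_le_mul_of_nonneg_right (by omega) (by omega)
      linarith
end

section
/- Let M ≥ 6 be even and N1 ≥ 2, and let P be the AULAs position set {kM : 0 ≤ k ≤ N1−1} ∪ {N1·M − M/2 − 1 + j : 1 ≤ j ≤ M/2} ∪ {N1·M + j : 1 ≤ j ≤ M/2 − 1}. Then the weight functions satisfy w(1) = M − 3 and w(2) = M − 4, where w(f) = |{(u,v) ∈ P×P : u − v = f}|. -/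
lemma mem_aulas (r N1 x t : ℤ) (ht : t = N1 * (2*r)) :
    x ∈ AULAs (2*r) N1 ↔
      (∃ k, 0 ≤ k ∧ k ≤ N1 - 1 ∧ x = k * (2*r)) ∨
      (t - r ≤ x ∧ x ≤ t - 1) ∨
      (t + 1 ≤ x ∧ x ≤ t + r - 1) := by
  have h2 : (2*r)/2 = r := Int.mul_ediv_cancel_left r (by norm_num)
  simp only [AULAs, Set.mem_union, Set.mem_setOf_eq, h2]
  subst ht
  constructor
  · rintro ((h | ⟨j, h1, h2, rfl⟩) | ⟨j, h1, h2, rfl⟩)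
    · exact Or.inl h
    · exact Or.inr (Or.inl ⟨by linarith, by linarith⟩)
    · exact Or.inr (Or.inr ⟨by linarith, by linarith⟩)
  · rintro (h | ⟨h1, h2⟩ | ⟨h1, h2⟩)
    · exact Or.inl (Or.inl h)
    · exact Or.inl (Or.inr ⟨x - (N1*(2*r) - r - 1), by linarith, by linarith, by ring⟩)
    · exact Or.inr ⟨x - N1*(2*r), by linarith, by linarith, by ring⟩

theorem stmt19 (M N1 : ℤ) (hM : 6 ≤ M) (hMe : Even M) (hN1 : 2 ≤ N1) :
    (weight (AULAs M N1) 1 : ℤ) = M - 3 ∧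
    (weight (AULAs M N1) 2 : ℤ) = M - 4 := by
  have hMe' : M % 2 = 0 := Int.even_iff.mp hMe
  obtain ⟨r, rfl⟩ : ∃ r, M = 2*r := ⟨M/2, by omega⟩
  have hr : 3 ≤ r := by omega
  obtain ⟨t, ht⟩ : ∃ t, t = N1 * (2*r) := ⟨_, rfl⟩
  have hAbd : ∀ x : ℤ, (∃ k, 0 ≤ k ∧ k ≤ N1 - 1 ∧ x = k*(2*r)) → 0 ≤ x ∧ x ≤ t - 2*r := by
    rintro x ⟨k, hk0, hk1, rfl⟩
    have h1 : k*(2*r) ≤ (N1-1)*(2*r) := mul_le_mul_of_nonneg_right hk1 (by linarith)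
    have h2 : (N1-1)*(2*r) = t - 2*r := by rw [ht]; ring
    exact ⟨mul_nonneg hk0 (by linarith), by linarith⟩
  have hAA : ∀ x y : ℤ, (∃ k, 0 ≤ k ∧ k ≤ N1 - 1 ∧ x = k*(2*r)) →
      (∃ k, 0 ≤ k ∧ k ≤ N1 - 1 ∧ y = k*(2*r)) → (x - y = 1 ∨ x - y = 2) → False := by
    rintro x y ⟨k1, -, -, rfl⟩ ⟨k2, -, -, rfl⟩ hf
    have hdvd : (2*r) ∣ (k1*(2*r) - k2*(2*r)) := ⟨k1 - k2, by ring⟩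
    rcases hf with h | h <;> rw [h] at hdvd <;>
      exact absurd (Int.le_of_dvd (by norm_num) hdvd) (by omega)
  constructor
  · -- f = 1
    have inj : Function.Injective (fun v : ℤ => (v+1, v)) := by
      intro a b h; simpa using congrArg Prod.snd h
    have key : {p : ℤ × ℤ | p.1 ∈ AULAs (2*r) N1 ∧ p.2 ∈ AULAs (2*r) N1 ∧ p.1 - p.2 = 1}
        = (fun v : ℤ => (v+1, v)) '' ↑(Finset.Icc (t-r) (t-2) ∪ Finset.Icc (t+1) (t+r-2)) := by
      ext ⟨u, v⟩
      simp only [Set.mem_setOf_eq, Set.mem_image, Finset.coe_union, Set.mem_union,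
        Finset.coe_Icc, Set.mem_Icc, Prod.mk.injEq]
      constructor
      · rintro ⟨hu, hv, huv⟩
        rw [mem_aulas r N1 _ t ht] at hu hv
        rcases hu with hu | hu | hu <;> rcases hv with hv | hv | hv
        · exact (hAA u v hu hv (Or.inl huv)).elim
        · exact absurd (hAbd u hu) (by omega)
        · exact absurd (hAbd u hu) (by omega)
        · exact absurd (hAbd v hv) (by omega)
        · exact ⟨v, by omega, by omega⟩
        · exact ⟨v, by omega, by omega⟩
        · exact absurd (hAbd v hv) (by omega)
        · exact ⟨v, by omega, by omega⟩
        · exact ⟨v, by omega, by omega⟩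
      · rintro ⟨a, ha, h1, h2⟩
        refine ⟨?_, ?_, by omega⟩ <;> rw [mem_aulas r N1 _ t ht] <;> exact Or.inr (by omega)
    have hdisj : Disjoint (Finset.Icc (t-r) (t-2)) (Finset.Icc (t+1) (t+r-2)) := by
      rw [Finset.disjoint_left]; intro a ha hb
      simp only [Finset.mem_Icc] at ha hb; omega
    have : weight (AULAs (2*r) N1) 1
        = (Finset.Icc (t-r) (t-2) ∪ Finset.Icc (t+1) (t+r-2)).card := by
      rw [weight, key, Set.ncard_image_of_injective _ inj, Set.ncard_coe_finset]
    rw [this, Finset.card_union_of_disjoint hdisj, Int.card_Icc, Int.card_Icc]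
    push_cast
    omega
  · -- f = 2
    have inj : Function.Injective (fun v : ℤ => (v+2, v)) := by
      intro a b h; simpa using congrArg Prod.snd h
    have key : {p : ℤ × ℤ | p.1 ∈ AULAs (2*r) N1 ∧ p.2 ∈ AULAs (2*r) N1 ∧ p.1 - p.2 = 2}
        = (fun v : ℤ => (v+2, v)) ''
          ↑(insert (t-1) (Finset.Icc (t-r) (t-3) ∪ Finset.Icc (t+1) (t+r-3))) := by
      ext ⟨u, v⟩
      simp only [Set.mem_setOf_eq, Set.mem_image, Finset.coe_insert, Set.mem_insert_iff,
        Finset.coe_union, Set.mem_union, Finset.coe_Icc, Set.mem_Icc, Prod.mk.injEq]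
      constructor
      · rintro ⟨hu, hv, huv⟩
        rw [mem_aulas r N1 _ t ht] at hu hv
        rcases hu with hu | hu | hu <;> rcases hv with hv | hv | hv
        · exact (hAA u v hu hv (Or.inr huv)).elim
        · exact absurd (hAbd u hu) (by omega)
        · exact absurd (hAbd u hu) (by omega)
        · exact absurd (hAbd v hv) (by omega)
        · exact ⟨v, by omega, by omega⟩
        · exact ⟨v, by omega, by omega⟩
        · exact absurd (hAbd v hv) (by omega)
        · exact ⟨v, by omega, by omega⟩
        · exact ⟨v, by omega, by omega⟩
      · rintro ⟨a, ha, h1, h2⟩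
        refine ⟨?_, ?_, by omega⟩ <;> rw [mem_aulas r N1 _ t ht] <;> exact Or.inr (by omega)
    have hdisj : Disjoint (Finset.Icc (t-r) (t-3)) (Finset.Icc (t+1) (t+r-3)) := by
      rw [Finset.disjoint_left]; intro a ha hb
      simp only [Finset.mem_Icc] at ha hb; omega
    have hnm : (t-1) ∉ (Finset.Icc (t-r) (t-3) ∪ Finset.Icc (t+1) (t+r-3)) := by
      simp only [Finset.mem_union, Finset.mem_Icc]; omega
    have : weight (AULAs (2*r) N1) 2
        = (insert (t-1) (Finset.Icc (t-r) (t-3) ∪ Finset.Icc (t+1) (t+r-3))).card := by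
      rw [weight, key, Set.ncard_image_of_injective _ inj, Set.ncard_coe_finset]
    rw [this, Finset.card_insert_of_notMem hnm, Finset.card_union_of_disjoint hdisj,
      Int.card_Icc, Int.card_Icc]
    push_cast
    omega
end
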